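/- If every service rate is non-decreasing, i.e. ν_j(i) ≤ ν_j(i+1) for all i ≥ 1 and all j = 1,…,J, then the function λ_eff is strictly increasing on (0, ∞); in particular, for each λ ∈ (0, λ_max) there is at most one x ∈ (0, ∞) with λ_eff(x) = λ. -/

import Mathlib

/-!
Put `r = η₀ / x` and `G_n(r) = ∑_{k ≤ n} r^k C^stb(n - k)`. Then `G_{n+1} = C^stb(n+1) + r G_n`
and `λ_eff(x) = η₀ G_{N-1}(r) / G_N(r)`, so it suffices that `R_n = G_{n+1} / G_n` is strictly
increasing in `r`. The recursion gives `R_{n+1}(r) = r + ρ (1 - r / R_n(r))` with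
`ρ = C^stb(n+2) / C^stb(n+1)`, which is strictly increasing as soon as `R_n` is and `ρ ≤ R_n`.
Both that bound and the induction rest on the log-concavity of `C^stb`: each station contributes
the log-concave sequence `m ↦ ∏_{i=1}^m η_j / ν_j(i)` (its ratios `η_j / ν_j(m)` decrease), and a
convolution of positive log-concave sequences is log-concave, by a Cauchy–Binet argument applied to
their (totally positive of order two) Toeplitz kernels.
-/

open Finset

/-- `Cstb J η ν m` is the normalisation constant `C^stb(m)` of the stability network:
the sum over tuples `(n₁,…,n_J)` with `n₁+⋯+n_J = m` of `∏_j ∏_{i=1}^{n_j} η_j/ν_j(i)`. -/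
noncomputable def Cstb (J : ℕ) (η : Fin J → ℝ) (ν : Fin J → ℕ → ℝ) (m : ℕ) : ℝ :=
  ∑ n ∈ Finset.Nat.antidiagonalTuple J m,
    ∏ j, ∏ i ∈ Finset.range (n j), η j / ν j (i + 1)

/-- The effective arrival rate of the lost-customers modification with arrival rate `x`. -/
noncomputable def lamEff (J N : ℕ) (η0 : ℝ) (η : Fin J → ℝ) (ν : Fin J → ℕ → ℝ)
    (x : ℝ) : ℝ :=
  x * (1 - Cstb J η ν N /
    ∑ n0 ∈ Finset.range (N + 1), (η0 / x) ^ n0 * Cstb J η ν (N - n0))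

theorem sum_mul_sum_le_of_cross_nonneg {ι : Type*} (s : Finset ι) (a b c d : ι → ℝ)
    (h : ∀ p ∈ s, ∀ q ∈ s, 0 ≤ (a p * b q - a q * b p) * (c p * d q - c q * d p)) :
    (∑ p ∈ s, a p * d p) * (∑ p ∈ s, b p * c p) ≤
      (∑ p ∈ s, a p * c p) * (∑ p ∈ s, b p * d p) := by
  have expand : ∀ p q, (a p * b q - a q * b p) * (c p * d q - c q * d p) =
      a p * c p * (b q * d q) + b p * d p * (a q * c q) - a p * d p * (b q * c q) -
        b p * c p * (a q * d q) := fun p q => by ring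
  have key : ∑ p ∈ s, ∑ q ∈ s, (a p * b q - a q * b p) * (c p * d q - c q * d p) =
      2 * ((∑ p ∈ s, a p * c p) * (∑ p ∈ s, b p * d p) -
        (∑ p ∈ s, a p * d p) * (∑ p ∈ s, b p * c p)) := by
    simp only [expand, sum_add_distrib, sum_sub_distrib, ← mul_sum, ← sum_mul]
    ring
  linarith [sum_nonneg fun p hp => sum_nonneg fun q hq => h p hp q hq]

def LogConcaveSeq (u : ℕ → ℝ) : Prop := ∀ k, u k * u (k + 2) ≤ u (k + 1) ^ 2

theorem LogConcaveSeq.mul_le_mul {u : ℕ → ℝ} (hu : LogConcaveSeq u) (hpos : ∀ k, 0 < u k)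
    {a b : ℕ} (hab : a ≤ b) : u a * u (b + 1) ≤ u (a + 1) * u b := by
  induction b, hab using Nat.le_induction with
  | base => rw [mul_comm]
  | succ b _ ih =>
    have h1 := mul_le_mul_of_nonneg_right ih (hpos (b + 2)).le
    have h2 := mul_le_mul_of_nonneg_left (hu b) (hpos (a + 1)).le
    refine le_of_mul_le_mul_right ?_ (hpos (b + 1))
    nlinarith

/-- Extension by zero to `ℤ`, so that the index shifts in the convolution inequality below need
no truncated subtraction. -/
def zeroExt (u : ℕ → ℝ) (z : ℤ) : ℝ := if 0 ≤ z then u z.toNat else 0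

section zeroExt

variable {u v : ℕ → ℝ}

@[simp] theorem zeroExt_natCast (n : ℕ) : zeroExt u n = u n := by simp [zeroExt]

theorem zeroExt_of_neg {z : ℤ} (hz : z < 0) : zeroExt u z = 0 := if_neg (by omega)

theorem zeroExt_nonneg (hpos : ∀ k, 0 < u k) (z : ℤ) : 0 ≤ zeroExt u z := by
  unfold zeroExt; split_ifs
  exacts [(hpos _).le, le_rfl]

theorem LogConcaveSeq.zeroExt_mul_le_mul (hu : LogConcaveSeq u) (hpos : ∀ k, 0 < u k)
    {x y : ℤ} (hxy : x ≤ y) : zeroExt u y * zeroExt u (x - 1) ≤ zeroExt u x * zeroExt u (y - 1) := by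
  rcases lt_or_ge x 1 with hx | hx
  · rw [zeroExt_of_neg (z := x - 1) (by omega), mul_zero]
    exact mul_nonneg (zeroExt_nonneg hpos _) (zeroExt_nonneg hpos _)
  obtain ⟨a, rfl⟩ : ∃ a : ℕ, x = a + 1 := ⟨(x - 1).toNat, by omega⟩
  obtain ⟨b, rfl⟩ : ∃ b : ℕ, y = b + 1 := ⟨(y - 1).toNat, by omega⟩
  simp only [add_sub_cancel_right]
  rw [mul_comm]
  exact_mod_cast hu.mul_le_mul hpos (by omega : a ≤ b)

theorem sum_range_zeroExt_mul {M R : ℕ} (hMR : M + 1 ≤ R) :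
    ∑ p ∈ range R, zeroExt u p * zeroExt v (M - p) = ∑ p ∈ range (M + 1), u p * v (M - p) := by
  rw [← sum_subset (range_subset_range.2 hMR)]
  · refine sum_congr rfl fun p hp => ?_
    rw [← Nat.cast_sub (by simpa [Nat.lt_succ_iff] using hp), zeroExt_natCast, zeroExt_natCast]
  · intro p hpR hpM
    rw [zeroExt_of_neg (z := (M : ℤ) - p) (by simp at hpM; omega), mul_zero]

theorem sum_range_succ_zeroExt_sub_one_mul (k : ℤ) (R : ℕ) :
    ∑ p ∈ range (R + 1), zeroExt u (p - 1) * zeroExt v (k - p) =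
      ∑ p ∈ range R, zeroExt u p * zeroExt v (k - 1 - p) := by
  rw [sum_range_succ', zeroExt_of_neg (by norm_num), zero_mul, add_zero]
  push_cast
  simp_rw [add_sub_cancel_right, sub_add_eq_sub_sub_swap]

end zeroExt

theorem LogConcaveSeq.conv {u v : ℕ → ℝ} (hu : LogConcaveSeq u) (hv : LogConcaveSeq v)
    (hupos : ∀ k, 0 < u k) (hvpos : ∀ k, 0 < v k) :
    LogConcaveSeq fun m => ∑ p ∈ range (m + 1), u p * v (m - p) := by
  intro m
  have cross : ∀ p q : ℕ, p ≤ q →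
      0 ≤ (zeroExt u p * zeroExt u (q - 1) - zeroExt u q * zeroExt u (p - 1)) *
        (zeroExt v (m + 1 - p) * zeroExt v (m + 2 - q) -
          zeroExt v (m + 1 - q) * zeroExt v (m + 2 - p)) := by
    intro p q hpq
    have hu' := hu.zeroExt_mul_le_mul hupos (Int.ofNat_le.2 hpq)
    have hv' := hv.zeroExt_mul_le_mul hvpos (x := m + 2 - q) (y := m + 2 - p) (by omega)
    rw [show (m : ℤ) + 2 - q - 1 = m + 1 - q by ring, show (m : ℤ) + 2 - p - 1 = m + 1 - p by ring]
      at hv'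
    exact mul_nonneg (by linarith) (by linarith)
  -- the four sums are the convolution at `m + 2`, `m`, `m + 1` and `m + 1`
  have key := sum_mul_sum_le_of_cross_nonneg (range (m + 3)) (fun p : ℕ => zeroExt u p)
    (fun p : ℕ => zeroExt u (p - 1)) (fun p : ℕ => zeroExt v (m + 1 - p))
    (fun p : ℕ => zeroExt v (m + 2 - p)) fun p _ q _ => by
      rcases le_total p q with hpq | hqp
      · exact cross p q hpq
      · convert cross q p hqp using 1; ring
  have conv_eq (M R : ℕ) (hMR : M + 1 ≤ R) (k : ℤ) (hk : k = M) :
      ∑ p ∈ range R, zeroExt u p * zeroExt v (k - p) = ∑ p ∈ range (M + 1), u p * v (M - p) := by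
    rw [hk]; exact sum_range_zeroExt_mul hMR
  have shift_eq (M : ℕ) (hM : M ≤ m + 1) (k : ℤ) (hk : k = M + 1) :
      ∑ p ∈ range (m + 3), zeroExt u (p - 1) * zeroExt v (k - p) =
        ∑ p ∈ range (M + 1), u p * v (M - p) := by
    rw [show m + 3 = m + 2 + 1 from rfl, sum_range_succ_zeroExt_sub_one_mul]
    exact conv_eq M (m + 2) (by omega) (k - 1) (by omega)
  rw [conv_eq (m + 2) _ le_rfl (m + 2) (by push_cast; ring),
    conv_eq (m + 1) _ (by omega) (m + 1) (by push_cast; ring),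
    shift_eq m (by omega) (m + 1) rfl, shift_eq (m + 1) le_rfl (m + 2) (by push_cast; ring)] at key
  simp only
  linarith

theorem sum_antidiagonalTuple_succ {M : Type*} [AddCommMonoid M] (J m : ℕ)
    (f : (Fin (J + 1) → ℕ) → M) :
    ∑ n ∈ Nat.antidiagonalTuple (J + 1) m, f n =
      ∑ pq ∈ antidiagonal m, ∑ n ∈ Nat.antidiagonalTuple J pq.2, f (Fin.cons pq.1 n) := by
  simp only [sum_eq_multiset_sum, Nat.antidiagonalTuple, Multiset.Nat.antidiagonalTuple,
    Multiset.map_coe, Multiset.sum_coe, List.Nat.antidiagonalTuple, List.flatMap_def,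
    List.map_flatten, List.sum_flatten, List.map_map]
  change _ = (Multiset.map _ (List.Nat.antidiagonal m : Multiset (ℕ × ℕ))).sum
  rw [Multiset.map_coe, Multiset.sum_coe]
  simp only [Function.comp_def, List.map_map]

theorem Cstb_one (η : Fin 1 → ℝ) (ν : Fin 1 → ℕ → ℝ) (m : ℕ) :
    Cstb 1 η ν m = ∏ i ∈ range m, η 0 / ν 0 (i + 1) := by
  simp [Cstb]

theorem Cstb_succ (J : ℕ) (η : Fin (J + 1) → ℝ) (ν : Fin (J + 1) → ℕ → ℝ) (m : ℕ) :
    Cstb (J + 1) η ν m = ∑ p ∈ range (m + 1), (∏ i ∈ range p, η 0 / ν 0 (i + 1)) *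
      Cstb J (fun j => η j.succ) (fun j => ν j.succ) (m - p) := by
  rw [Cstb, sum_antidiagonalTuple_succ, Nat.sum_antidiagonal_eq_sum_range_succ_mk]
  simp only [Cstb, Fin.prod_univ_succ, Fin.cons_zero, Fin.cons_succ, mul_sum]

section station

variable {e : ℝ} {w : ℕ → ℝ}

theorem prod_range_div_pos (he : 0 < e) (hw : ∀ i, 1 ≤ i → 0 < w i) (m : ℕ) :
    0 < ∏ i ∈ range m, e / w (i + 1) :=
  prod_pos fun i _ => div_pos he (hw (i + 1) (by omega))

theorem logConcaveSeq_prod_range_div (he : 0 < e) (hw : ∀ i, 1 ≤ i → 0 < w i)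
    (hmono : ∀ i, 1 ≤ i → w i ≤ w (i + 1)) :
    LogConcaveSeq fun m => ∏ i ∈ range m, e / w (i + 1) := by
  intro m
  simp only [prod_range_succ]
  have hP := prod_range_div_pos he hw m
  have hdec : e / w (m + 2) ≤ e / w (m + 1) :=
    div_le_div_of_nonneg_left he.le (hw _ (by omega)) (hmono _ (by omega))
  have := div_pos he (hw (m + 1) (by omega))
  nlinarith [mul_le_mul_of_nonneg_left hdec (mul_nonneg (mul_nonneg hP.le hP.le) this.le)]

end station

theorem Cstb_pos {J : ℕ} {η : Fin (J + 1) → ℝ} (hη : ∀ j, 0 < η j) {ν : Fin (J + 1) → ℕ → ℝ}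
    (hν : ∀ j i, 1 ≤ i → 0 < ν j i) (m : ℕ) : 0 < Cstb (J + 1) η ν m := by
  induction J generalizing m with
  | zero => rw [Cstb_one]; exact prod_range_div_pos (hη 0) (hν 0) m
  | succ J ih =>
    rw [Cstb_succ]
    exact sum_pos (fun p _ => mul_pos (prod_range_div_pos (hη 0) (hν 0) p)
      (ih (fun j => hη _) (fun j => hν _) _)) nonempty_range_add_one

theorem Cstb_logConcave {J : ℕ} {η : Fin (J + 1) → ℝ} (hη : ∀ j, 0 < η j)
    {ν : Fin (J + 1) → ℕ → ℝ} (hν : ∀ j i, 1 ≤ i → 0 < ν j i)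
    (hmono : ∀ j i, 1 ≤ i → ν j i ≤ ν j (i + 1)) : LogConcaveSeq (Cstb (J + 1) η ν) := by
  induction J with
  | zero =>
    rw [funext (Cstb_one η ν)]
    exact logConcaveSeq_prod_range_div (hη 0) (hν 0) (hmono 0)
  | succ J ih =>
    rw [funext (Cstb_succ (J + 1) η ν)]
    exact (logConcaveSeq_prod_range_div (hη 0) (hν 0) (hmono 0)).conv
      (ih (fun j => hη _) (fun j => hν _) (fun j => hmono _)) (prod_range_div_pos (hη 0) (hν 0))
      (Cstb_pos (fun j => hη _) (fun j => hν _))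

theorem StrictMonoOn.add_mul_one_sub_div {f : ℝ → ℝ} {ρ : ℝ} (hf : StrictMonoOn f (Set.Ioi 0))
    (hρ : 0 < ρ) (hρf : ∀ r, 0 < r → ρ ≤ f r) :
    StrictMonoOn (fun r => r + ρ * (1 - r / f r)) (Set.Ioi 0) := by
  intro s (hs : 0 < s) t ht hst
  have hfst := hf hs ht hst
  have hρs := hρf s hs
  have hfs : 0 < f s := hρ.trans_le hρs
  have hft : 0 < f t := hfs.trans hfst
  suffices ρ * (t * f s - s * f t) < (t - s) * (f s * f t) by
    simp only [mul_one_sub, mul_div_assoc']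
    rw [← sub_pos] at this ⊢
    convert div_pos this (mul_pos hfs hft) using 1
    field_simp
    ring
  -- the difference is `t f(s) (f(t) - ρ) - s f(t) (f(s) - ρ)` and `f(s) (f(t) - ρ) > f(t) (f(s) - ρ)`
  nlinarith [mul_pos hs (mul_pos hρ (sub_pos.2 hfst)),
    mul_nonneg (sub_nonneg.2 hst.le) (mul_nonneg hfs.le (sub_nonneg.2 (hρs.trans hfst.le)))]

def geomConv (C : ℕ → ℝ) (r : ℝ) (n : ℕ) : ℝ := ∑ k ∈ range (n + 1), r ^ k * C (n - k)

section geomConv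

variable {C : ℕ → ℝ} {r : ℝ}

@[simp] theorem geomConv_zero : geomConv C r 0 = C 0 := by simp [geomConv]

theorem geomConv_succ (n : ℕ) : geomConv C r (n + 1) = C (n + 1) + r * geomConv C r n := by
  rw [geomConv, sum_range_succ', geomConv, mul_sum, add_comm]
  simp [pow_succ, mul_assoc, mul_left_comm]

theorem geomConv_pos (hC : ∀ k, 0 < C k) (hr : 0 ≤ r) (n : ℕ) : 0 < geomConv C r n := by
  induction n with
  | zero => simpa using hC 0
  | succ n ih => rw [geomConv_succ]; exact add_pos_of_pos_of_nonneg (hC _) (by positivity)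

theorem LogConcaveSeq.mul_geomConv_le (hlc : LogConcaveSeq C) (hC : ∀ k, 0 < C k) (hr : 0 ≤ r)
    (n : ℕ) : C (n + 2) * geomConv C r n ≤ C (n + 1) * geomConv C r (n + 1) := by
  induction n with
  | zero =>
    simp only [geomConv_succ, geomConv_zero]
    nlinarith [hlc 0, mul_nonneg hr (mul_nonneg (hC 1).le (hC 0).le)]
  | succ n ih =>
    have h : C (n + 3) * geomConv C r n ≤ C (n + 2) * geomConv C r (n + 1) := by
      refine le_of_mul_le_mul_left ?_ (hC (n + 2))
      nlinarith [hlc (n + 1), mul_le_mul_of_nonneg_left ih (hC (n + 3)).le,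
        geomConv_pos hC hr (n + 1)]
    rw [geomConv_succ, geomConv_succ (n + 1)]
    nlinarith [hlc (n + 1), mul_le_mul_of_nonneg_left h hr]

theorem geomConv_succ_div_eq (hC : ∀ k, 0 < C k) (hr : 0 ≤ r) (n : ℕ) :
    geomConv C r (n + 2) / geomConv C r (n + 1) =
      r + C (n + 2) / C (n + 1) * (1 - r / (geomConv C r (n + 1) / geomConv C r n)) := by
  have hG := geomConv_pos hC hr n
  have hG' := geomConv_pos hC hr (n + 1)
  have := hC (n + 1)
  field_simp
  rw [geomConv_succ (n + 1), geomConv_succ n]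
  ring

theorem LogConcaveSeq.strictMonoOn_geomConv_div (hlc : LogConcaveSeq C) (hC : ∀ k, 0 < C k)
    (n : ℕ) : StrictMonoOn (fun r => geomConv C r (n + 1) / geomConv C r n) (Set.Ioi 0) := by
  induction n with
  | zero =>
    intro s _ t _ hst
    have := hC 0
    simp only [geomConv_succ, geomConv_zero]
    gcongr
  | succ n ih =>
    have hρ : 0 < C (n + 2) / C (n + 1) := div_pos (hC _) (hC _)
    have key := ih.add_mul_one_sub_div hρ fun r hr => by
      rw [div_le_div_iff₀ (hC _) (geomConv_pos hC hr.le n)]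
      linarith [hlc.mul_geomConv_le hC hr.le n]
    exact key.congr fun r (hr : 0 < r) => (geomConv_succ_div_eq hC hr.le n).symm

end geomConv

theorem lamEff_eq_div {J n : ℕ} {η0 : ℝ} {η : Fin J → ℝ} {ν : Fin J → ℕ → ℝ}
    (hC : ∀ m, 0 < Cstb J η ν m) (hη0 : 0 < η0) {x : ℝ} (hx : 0 < x) :
    lamEff J (n + 1) η0 η ν x =
      η0 / (geomConv (Cstb J η ν) (η0 / x) (n + 1) / geomConv (Cstb J η ν) (η0 / x) n) := by
  have hG := geomConv_pos hC (div_pos hη0 hx).le n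
  have hN := hC (n + 1)
  rw [lamEff, ← geomConv, geomConv_succ]
  field_simp
  ring

/-- If all service rates are non-decreasing, then `λ_eff` is strictly increasing on `(0,∞)`;
in particular for each `λ ∈ (0, λ_max)` there is at most one `x > 0` with `λ_eff(x) = λ`. -/
theorem lamEff_strictMonoOn
    (J N : ℕ) (hJ : 1 ≤ J) (hN : 1 ≤ N)
    (η0 : ℝ) (hη0 : 0 < η0)
    (η : Fin J → ℝ) (hη : ∀ j, 0 < η j)
    (ν : Fin J → ℕ → ℝ) (hν : ∀ j i, 1 ≤ i → 0 < ν j i)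
    (hmono : ∀ j i, 1 ≤ i → ν j i ≤ ν j (i + 1)) :
    StrictMonoOn (lamEff J N η0 η ν) (Set.Ioi 0) ∧
    ∀ lam : ℝ, 0 < lam → lam < η0 * Cstb J η ν (N - 1) / Cstb J η ν N →
      ∀ x y : ℝ, 0 < x → 0 < y →
        lamEff J N η0 η ν x = lam → lamEff J N η0 η ν y = lam → x = y := by
  obtain ⟨J, rfl⟩ : ∃ J', J = J' + 1 := ⟨J - 1, by omega⟩
  obtain ⟨n, rfl⟩ : ∃ n, N = n + 1 := ⟨N - 1, by omega⟩
  have hC := Cstb_pos hη hν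
  have hratio := (Cstb_logConcave hη hν hmono).strictMonoOn_geomConv_div hC n
  have hstrict : StrictMonoOn (lamEff (J + 1) (n + 1) η0 η ν) (Set.Ioi 0) := by
    intro x (hx : 0 < x) y (hy : 0 < y) hxy
    have hrx := div_pos hη0 hx
    have hry := div_pos hη0 hy
    rw [lamEff_eq_div hC hη0 hx, lamEff_eq_div hC hη0 hy]
    exact div_lt_div_of_pos_left hη0
      (div_pos (geomConv_pos hC hry.le _) (geomConv_pos hC hry.le _))
      (hratio hry hrx (div_lt_div_of_pos_left hη0 hx hxy))
  exact ⟨hstrict, fun _ _ _ x y hx hy hxl hyl => hstrict.injOn hx hy (hxl.trans hyl.symm)⟩
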